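/- Let X be a finite connected simple graph that is regular of odd degree. If X is both vertex-transitive and edge-transitive, then X is arc-transitive. -/

import Mathlib

namespace HAT

variable {V : Type*} {W : Type*}

/-- The automorphism group of a simple graph, as a subgroup of the permutation
group of the vertex set. -/
def autSubgroup (X : SimpleGraph V) : Subgroup (Equiv.Perm V) where
  carrier := {g | ∀ u v : V, X.Adj (g u) (g v) ↔ X.Adj u v}
  one_mem' := by intro u v; simp
  mul_mem' := by
    intro a b ha hb u v
    simp only [Equiv.Perm.mul_apply]
    rw [ha, hb]
  inv_mem' := by
    intro a ha u v
    have h := (ha (a⁻¹ u) (a⁻¹ v)).symm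
    simpa using h

/-- A subgroup of the permutation group of the vertex set acts transitively on vertices. -/
def VertexTransitive (G : Subgroup (Equiv.Perm V)) : Prop :=
  ∀ u v : V, ∃ g ∈ G, g u = v

/-- `G` acts transitively on the edges of `X`. -/
def EdgeTransitive (X : SimpleGraph V) (G : Subgroup (Equiv.Perm V)) : Prop :=
  ∀ ⦃u v x y : V⦄, X.Adj u v → X.Adj x y →
    ∃ g ∈ G, (g u = x ∧ g v = y) ∨ (g u = y ∧ g v = x)

/-- `G` acts transitively on the arcs of `X`. -/
def ArcTransitive (X : SimpleGraph V) (G : Subgroup (Equiv.Perm V)) : Prop :=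
  ∀ ⦃u v x y : V⦄, X.Adj u v → X.Adj x y → ∃ g ∈ G, g u = x ∧ g v = y

/-- `G` acts sharply transitively (regularly) on the arcs of `X`. -/
def ArcRegular (X : SimpleGraph V) (G : Subgroup (Equiv.Perm V)) : Prop :=
  ∀ ⦃u v x y : V⦄, X.Adj u v → X.Adj x y →
    ∃! g : G, (g : Equiv.Perm V) u = x ∧ (g : Equiv.Perm V) v = y

/-- `X` is `G`-half-arc-transitive. -/
def HalfArcTransitive (X : SimpleGraph V) (G : Subgroup (Equiv.Perm V)) : Prop :=
  VertexTransitive G ∧ EdgeTransitive X G ∧ ¬ ArcTransitive X G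

/-- `X` is regular of degree `k`. -/
def RegularOfDegree (X : SimpleGraph V) (k : ℕ) : Prop :=
  ∀ v : V, Nat.card (X.neighborSet v) = k

/-- A group of permutations acts semiregularly: all point stabilizers are trivial. -/
def Semiregular (N : Subgroup (Equiv.Perm V)) : Prop :=
  ∀ g ∈ N, (∃ v : V, g v = v) → g = 1

/-- A graph is a Cayley graph iff its automorphism group contains a subgroup
acting regularly (sharply transitively) on the vertices. -/
def IsCayleyGraph (X : SimpleGraph V) : Prop :=
  ∃ H : Subgroup (Equiv.Perm V), H ≤ autSubgroup X ∧
    ∀ u v : V, ∃! h : H, (h : Equiv.Perm V) u = v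

/-- The set of `N`-orbits on the vertex set. -/
abbrev Orbits (N : Subgroup (Equiv.Perm V)) : Type _ := Quotient (MulAction.orbitRel N V)

/-- The `N`-orbit of a vertex. -/
def orbitMk (N : Subgroup (Equiv.Perm V)) (v : V) : Orbits N :=
  Quotient.mk (MulAction.orbitRel N V) v

/-- The quotient graph `X_N`: vertices are the `N`-orbits, two orbits being adjacent
iff some vertex of one is adjacent in `X` to some vertex of the other. -/
def quotientGraph (X : SimpleGraph V) (N : Subgroup (Equiv.Perm V)) :
    SimpleGraph (Orbits N) :=
  SimpleGraph.fromRel (fun B C => ∃ u v : V, orbitMk N u = B ∧ orbitMk N v = C ∧ X.Adj u v)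

/-- `X` is an `N`-regular covering of the quotient graph `X_N`: `N` is semiregular and
the orbit projection maps each neighbourhood bijectively onto the neighbourhood of the
corresponding orbit. -/
def IsRegularCover (X : SimpleGraph V) (N : Subgroup (Equiv.Perm V)) : Prop :=
  Semiregular N ∧
    ∀ v : V, Set.BijOn (orbitMk N) (X.neighborSet v)
      ((quotientGraph X N).neighborSet (orbitMk N v))

/-- The permutations of the orbit set induced by elements of `G` (this is the image of
the natural action of `G/N` when `N` is normal in `G`). -/
def inducedQuotSubgroup (G N : Subgroup (Equiv.Perm V)) :
    Subgroup (Equiv.Perm (Orbits N)) where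
  carrier := {σ | ∃ g ∈ G, ∀ u : V, σ (orbitMk N u) = orbitMk N (g u)}
  one_mem' := ⟨1, G.one_mem, fun u => by simp⟩
  mul_mem' := by
    rintro σ τ ⟨g, hg, hgs⟩ ⟨h, hh, hhs⟩
    refine ⟨g * h, G.mul_mem hg hh, fun u => ?_⟩
    simp [Equiv.Perm.mul_apply, hhs u, hgs (h u)]
  inv_mem' := by
    rintro σ ⟨g, hg, hgs⟩
    refine ⟨g⁻¹, G.inv_mem hg, fun u => ?_⟩
    have h1 := hgs (g⁻¹ u)
    rw [show g (g⁻¹ u) = u from g.apply_symm_apply u] at h1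
    rw [← h1, show σ⁻¹ (σ (orbitMk N (g⁻¹ u))) = orbitMk N (g⁻¹ u) from σ.symm_apply_apply _]

/-- A voltage assignment on the arcs of `Y` with values in the group `K`. -/
def IsVoltage (Y : SimpleGraph W) (K : Type*) [Group K] (ξ : W → W → K) : Prop :=
  ∀ u v : W, Y.Adj u v → ξ v u = (ξ u v)⁻¹

/-- The derived graph `Y ×_ξ K` of a voltage assignment `ξ`. -/
def derivedGraph (Y : SimpleGraph W) {K : Type*} [Group K] (ξ : W → W → K) :
    SimpleGraph (W × K) :=
  SimpleGraph.fromRel (fun a b => Y.Adj a.1 b.1 ∧ b.2 = ξ a.1 b.1 * a.2)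

/-- The graph `X(r; m, n)`: vertices `Z_m × Z_n`, with `(i,j)` adjacent to
`(i+1, j ± r^i)`. -/
def XG (m : ℕ) {n : ℕ} (r : (ZMod n)ˣ) : SimpleGraph (ZMod m × ZMod n) :=
  SimpleGraph.fromRel (fun a b =>
    b.1 = a.1 + 1 ∧
      (b.2 = a.2 + (r : ZMod n) ^ (a.1.val) ∨ b.2 = a.2 - (r : ZMod n) ^ (a.1.val)))

/-- The Praeger–Xu graph `C(2;p,2)`: vertices `Z_p × Z_2 × Z_2`, with `(i,(x,y))`
adjacent to `(i+1,(y,z))`. -/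
def Cp22 (p : ℕ) : SimpleGraph (ZMod p × ZMod 2 × ZMod 2) :=
  SimpleGraph.fromRel (fun a b => b.1 = a.1 + 1 ∧ b.2.1 = a.2.2)

/-- The lexicographic product `C_n[2K_1]`: vertices `Z_n × Z_2`, with `(i,x)`
adjacent to `(j,y)` iff `j = i ± 1`. -/
def cyc2K1 (n : ℕ) : SimpleGraph (ZMod n × ZMod 2) :=
  SimpleGraph.fromRel (fun a b => b.1 = a.1 + 1)

/-- The wreath graph `W(6,2)`: vertices `Z_6 × Z_2`, with `(i,x)` adjacent to `(i+1,y)`. -/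
def W62 : SimpleGraph (ZMod 6 × ZMod 2) :=
  SimpleGraph.fromRel (fun a b => b.1 = a.1 + 1)

/-- Base relation for the Rose Window graph `R_6(5,4)`: `inl i` is `S_i`, `inr i` is `Q_i`. -/
def roseR : (ZMod 6 ⊕ ZMod 6) → (ZMod 6 ⊕ ZMod 6) → Prop
  | Sum.inl i, Sum.inl j => j = i + 1
  | Sum.inl i, Sum.inr j => j = i ∨ i = j + 5
  | Sum.inr i, Sum.inr j => j = i + 4
  | Sum.inr _, Sum.inl _ => False

/-- The Rose Window graph `R_6(5,4)`. -/
def roseWindow : SimpleGraph (ZMod 6 ⊕ ZMod 6) := SimpleGraph.fromRel roseR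

/-- An elementary abelian `q`-group. -/
def IsElementaryAbelian (q : ℕ) (H : Type*) [Group H] : Prop :=
  (∀ a b : H, a * b = b * a) ∧ ∀ x : H, x ≠ 1 → orderOf x = q

/-! If `Aut X` is edge- but not arc-transitive, the orbit of a single arc contains exactly
one of the two arcs of every edge, i.e. it is an `Aut X`-invariant orientation of `X`.
By vertex-transitivity all out-degrees of this orientation are equal, and so are all
in-degrees; counting its arcs by tails and by heads then shows that out- and in-degree
agree, so the valency is even. -/

open Finset

def IsInvariant (G : Subgroup (Equiv.Perm V)) (R : V → V → Prop) : Prop :=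
  ∀ g ∈ G, ∀ p q, R p q → R (g p) (g q)

section ArcOrbit

variable {G : Subgroup (Equiv.Perm V)} {X : SimpleGraph V} {u v p q : V}

def arcOrbit (G : Subgroup (Equiv.Perm V)) (u v : V) (p q : V) : Prop :=
  ∃ g ∈ G, g u = p ∧ g v = q

theorem isInvariant_arcOrbit : IsInvariant G (arcOrbit G u v) := by
  rintro g hg _ _ ⟨f, hf, rfl, rfl⟩
  exact ⟨g * f, G.mul_mem hg hf, rfl, rfl⟩

theorem adj_of_arcOrbit (hG : G ≤ autSubgroup X) (huv : X.Adj u v)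
    (h : arcOrbit G u v p q) : X.Adj p q := by
  obtain ⟨g, hg, rfl, rfl⟩ := h
  exact (hG hg u v).mpr huv

theorem exists_reverse_of_arcOrbit_swap (h : arcOrbit G u v p q) (h' : arcOrbit G u v q p) :
    ∃ g ∈ G, g u = v ∧ g v = u := by
  obtain ⟨f, hf, rfl, rfl⟩ := h
  obtain ⟨f', hf', hu, hv⟩ := h'
  exact ⟨f⁻¹ * f', G.mul_mem (G.inv_mem hf) hf', by simp [hu], by simp [hv]⟩

theorem arcOrbit_or_arcOrbit_swap (he : EdgeTransitive X G) (huv : X.Adj u v)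
    (hpq : X.Adj p q) : arcOrbit G u v p q ∨ arcOrbit G u v q p := by
  obtain ⟨g, hg, ⟨hu, hv⟩ | ⟨hu, hv⟩⟩ := he huv hpq
  · exact .inl ⟨g, hg, hu, hv⟩
  · exact .inr ⟨g, hg, hu, hv⟩

theorem arcTransitive_of_exists_reverse (he : EdgeTransitive X G) (huv : X.Adj u v)
    (hrev : ∃ g ∈ G, g u = v ∧ g v = u) : ArcTransitive X G := by
  obtain ⟨s, hs, hsu, hsv⟩ := hrev
  have h_all : ∀ ⦃p q⦄, X.Adj p q → arcOrbit G u v p q := by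
    intro p q hpq
    rcases arcOrbit_or_arcOrbit_swap he huv hpq with h | ⟨g, hg, hu, hv⟩
    · exact h
    · exact ⟨g * s, G.mul_mem hg hs, by simp [hsu, hv], by simp [hsv, hu]⟩
  intro a b x y hab hxy
  obtain ⟨g₁, hg₁, rfl, rfl⟩ := h_all hab
  obtain ⟨g₂, hg₂, rfl, rfl⟩ := h_all hxy
  exact ⟨g₂ * g₁⁻¹, G.mul_mem hg₂ (G.inv_mem hg₁), by simp, by simp⟩

theorem card_neighborFinset_eq_of_not_exists_reverse [Fintype V] [DecidableEq V]
    [DecidableRel X.Adj] [DecidableRel (arcOrbit G u v)] (hG : G ≤ autSubgroup X)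
    (he : EdgeTransitive X G) (huv : X.Adj u v) (hrev : ¬∃ g ∈ G, g u = v ∧ g v = u) (a : V) :
    #(X.neighborFinset a) = #{w | arcOrbit G u v a w} + #{w | arcOrbit G u v w a} := by
  have h_nbhd :
      X.neighborFinset a = ({w | arcOrbit G u v a w ∨ arcOrbit G u v w a} : Finset V) := by
    ext w
    simp only [SimpleGraph.mem_neighborFinset, mem_filter, mem_univ, true_and]
    exact ⟨arcOrbit_or_arcOrbit_swap he huv,
      (·.elim (adj_of_arcOrbit hG huv) (adj_of_arcOrbit hG huv · |>.symm))⟩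
  rw [h_nbhd, filter_or, card_union_of_disjoint]
  exact disjoint_filter.2 fun _ _ h h' => hrev (exists_reverse_of_arcOrbit_swap h h')

end ArcOrbit

section Counting

variable [Fintype V] {G : Subgroup (Equiv.Perm V)} {R : V → V → Prop} [DecidableRel R]

theorem IsInvariant.card_filter_le_apply (hR : IsInvariant G R) {g : Equiv.Perm V}
    (hg : g ∈ G) (a : V) : #{w | R a w} ≤ #{w | R (g a) w} :=
  card_le_card_of_injOn g (fun w hw => by simpa using hR g hg a w (by simpa using hw))
    g.injective.injOn

theorem IsInvariant.card_filter_eq_of_vertexTransitive (hR : IsInvariant G R)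
    (hv : VertexTransitive G) (a b : V) : #{w | R a w} = #{w | R b w} := by
  obtain ⟨g, hg, rfl⟩ := hv a b
  refine le_antisymm (hR.card_filter_le_apply hg a) ?_
  simpa using hR.card_filter_le_apply (G.inv_mem hg) (g a)

theorem IsInvariant.card_filter_eq_card_filter_swap (hR : IsInvariant G R)
    (hv : VertexTransitive G) (a : V) : #{w | R a w} = #{w | R w a} := by
  have hR_swap : IsInvariant G fun p q => R q p := fun g hg p q => hR g hg q p
  have h_sum := sum_card_bipartiteAbove_eq_sum_card_bipartiteBelow (s := univ) (t := univ) R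
  simp only [bipartiteAbove, bipartiteBelow] at h_sum
  rw [sum_congr rfl fun b _ => hR.card_filter_eq_of_vertexTransitive hv b a,
    sum_congr rfl fun b _ => hR_swap.card_filter_eq_of_vertexTransitive hv b a,
    sum_const, sum_const, smul_eq_mul, smul_eq_mul] at h_sum
  exact Nat.eq_of_mul_eq_mul_left (card_pos.2 ⟨a, mem_univ a⟩) h_sum

end Counting

theorem stmt13_general {V : Type*} [Fintype V] (X : SimpleGraph V)
    (k : ℕ) (hk : Odd k) (hreg : RegularOfDegree X k)
    (hv : VertexTransitive (autSubgroup X)) (he : EdgeTransitive X (autSubgroup X)) :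
    ArcTransitive X (autSubgroup X) := by
  classical
  by_contra hnot
  obtain ⟨u, v, -, -, huv, -⟩ := by simpa only [ArcTransitive, not_forall] using hnot
  have hrev : ¬∃ g ∈ autSubgroup X, g u = v ∧ g v = u :=
    fun h => hnot (arcTransitive_of_exists_reverse he huv h)
  have h_deg := card_neighborFinset_eq_of_not_exists_reverse le_rfl he huv hrev u
  rw [← isInvariant_arcOrbit.card_filter_eq_card_filter_swap hv,
    SimpleGraph.card_neighborFinset_eq_degree, ← SimpleGraph.card_neighborSet_eq_degree,
    ← Nat.card_eq_fintype_card, hreg u] at h_deg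
  exact Nat.not_even_iff_odd.2 hk ⟨_, h_deg⟩

/-- Tutte: A finite connected graph, regular of odd degree, which is
both vertex-transitive and edge-transitive, is arc-transitive. -/
theorem stmt13 {V : Type*} [Fintype V] (X : SimpleGraph V) (hconn : X.Connected)
    (k : ℕ) (hk : Odd k) (hreg : RegularOfDegree X k)
    (hv : VertexTransitive (autSubgroup X)) (he : EdgeTransitive X (autSubgroup X)) :
    ArcTransitive X (autSubgroup X) :=
  stmt13_general X k hk hreg hv he

end HAT
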